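/- arXiv:2507.04714 — 2 statements merged into one kernel-verified Lean document; each statement's English description precedes it below -/
import Mathlib

section
/- Let T be a finite tree in which every vertex has odd degree, and let v be an active vertex of T (fewer than (deg_T(v)-1)/2 of its neighbours are leaves). Let t be the maximum number of vertices in a path of active vertices starting at v. Then v is t-stable, i.e., for every s ≥ t with the same parity as t, ξ_{s+2}(v) = ξ_s(v). -/
/-!
Majority dynamics is monotone, so if `u` changes its opinion between times `s + 1` and `s + 3`,
some neighbour `x` changed to the same new opinion between times `s` and `s + 2`. Fix a non-leaf
neighbour `v` of `u`. If `u` is not active, a change of `u` copies `v`: otherwise `v` together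
with the leaves at `u` (which copy `u`'s old opinion) would be a strict majority for it.
If `u` is active and `x ≠ v`, the same statement for the pair `(x, u)`, whose active paths avoiding
`u` are shorter by one (a tree has no cycles), says that `x` copied `u`'s old opinion, which is
absurd. Induction on the length of the longest active path from `u` avoiding `v` thus shows that
from that time on every change of `u` copies `v`; at the active vertex itself, with no such `v`,
no change is possible.
-/

open SimpleGraph Set

variable {V : Type*}

/-- The majority-dynamics process generated by the initial opinion vector `σ`:
`ξ (t+1) v` is the sign of the sum of the opinions `ξ t` over the neighbours of `v`. -/
noncomputable def dyn (G : SimpleGraph V) (σ : V → ℤ) : ℕ → V → ℤ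
  | 0 => σ
  | t + 1 => fun v => if 0 < ∑ᶠ u ∈ G.neighborSet v, dyn G σ t u then 1 else -1

/-- `σ` is a valid vector of opinions, i.e. takes values in `{-1, 1}`. -/
def PM (σ : V → ℤ) : Prop := ∀ v, σ v = 1 ∨ σ v = -1

/-- The degree of a vertex. -/
noncomputable def degree' (G : SimpleGraph V) (v : V) : ℕ := (G.neighborSet v).ncard

/-- A leaf is a vertex of degree 1. -/
def IsLeaf (G : SimpleGraph V) (v : V) : Prop := degree' G v = 1

/-- The number of neighbours of `v` that are leaves. -/
noncomputable def leafNbrs (G : SimpleGraph V) (v : V) : ℕ := {u | G.Adj v u ∧ IsLeaf G u}.ncard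

/-- All degrees of `G` are odd. -/
def OddDegrees (G : SimpleGraph V) : Prop := ∀ v, Odd (degree' G v)

/-- `v` is `t`-stable for the process `ξ`. -/
def Stable (ξ : ℕ → V → ℤ) (v : V) (t : ℕ) : Prop :=
  ∀ s, t ≤ s → s % 2 = t % 2 → ξ (s + 2) v = ξ s v

/-- A vertex is active if strictly fewer than `(deg v - 1)/2` of its neighbours are leaves. -/
noncomputable def Active (G : SimpleGraph V) (v : V) : Prop :=
  2 * leafNbrs G v < degree' G v - 1

section MajorityDynamics

open Finset
open scoped Classical

lemma notMem_support_of_isAcyclic {G : SimpleGraph V} (hG : G.IsAcyclic) {u v x w : V}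
    (hux : G.Adj u x) (huv : G.Adj u v) (hxv : x ≠ v) {p : G.Walk x w} (hp : p.IsPath)
    (hu : u ∉ p.support) : v ∉ p.support := by
  intro hv
  let q : G.Path x v := ⟨p.takeUntil v hv, hp.takeUntil hv⟩
  let r : G.Path x v := ⟨.cons hux.symm (.cons huv .nil),
    (Walk.IsPath.nil.cons (by simp [huv.ne])).cons (by simp [hux.ne', hxv])⟩
  have hqr : q.1.support = r.1.support := by rw [(hG.subsingleton_path x v).elim q r]
  exact hu (p.support_takeUntil_subset_support hv (hqr ▸ by simp [r]))

def ActivePathsLE (G : SimpleGraph V) (u v : V) (k : ℕ) : Prop :=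
  ∀ w (p : G.Walk u w), p.IsPath → (∀ x ∈ p.support, Active G x) → v ∉ p.support →
    p.length + 1 ≤ k

lemma ActivePathsLE.of_adj {G : SimpleGraph V} (hG : G.IsAcyclic) {u v x : V} {k : ℕ}
    (h : ActivePathsLE G u v (k + 1)) (hu : Active G u) (hux : G.Adj u x) (huv : G.Adj u v)
    (hxv : x ≠ v) : ActivePathsLE G x u k := by
  intro w p hp hpa hup
  have hvp := notMem_support_of_isAcyclic hG hux huv hxv hp hup
  simpa using h w (.cons hux p) (hp.cons hup) (by simpa [hu] using hpa) (by simp [huv.ne', hvp])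

lemma not_isLeaf_of_active {G : SimpleGraph V} {u : V} (hu : Active G u) : ¬IsLeaf G u := by
  intro hl
  rw [Active, hl] at hu
  omega

lemma dyn_pm (G : SimpleGraph V) {σ : V → ℤ} (hσ : PM σ) : ∀ t, PM (dyn G σ t)
  | 0 => hσ
  | t + 1 => fun v => by simp only [dyn]; split_ifs <;> simp

variable {G : SimpleGraph V} [G.LocallyFinite] {σ : V → ℤ}

lemma dyn_succ (t : ℕ) (v : V) :
    dyn G σ (t + 1) v = if 0 < ∑ u ∈ G.neighborFinset v, dyn G σ t u then 1 else -1 := by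
  simp only [dyn, ← coe_neighborFinset, finsum_mem_coe_finset]

lemma degree'_eq_card (v : V) : degree' G v = #(G.neighborFinset v) := by
  rw [degree', ← coe_neighborFinset, Set.ncard_coe_finset]

lemma neighborFinset_eq_singleton_of_isLeaf {x u : V} (hx : IsLeaf G x) (hxu : G.Adj x u) :
    G.neighborFinset x = {u} := by
  obtain ⟨b, hb⟩ := card_eq_one.mp ((degree'_eq_card x).symm.trans hx)
  have hu : u ∈ G.neighborFinset x := (mem_neighborFinset _ _ _).mpr hxu
  rw [hb, Finset.mem_singleton] at hu
  rw [hb, hu]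

lemma dyn_succ_of_isLeaf (hσ : PM σ) {x u : V} (hx : IsLeaf G x) (hxu : G.Adj x u) (t : ℕ) :
    dyn G σ (t + 1) x = dyn G σ t u := by
  rw [dyn_succ, neighborFinset_eq_singleton_of_isLeaf hx hxu, sum_singleton]
  rcases dyn_pm G hσ t u with h | h <;> simp [h]

lemma dyn_succ_eq_of_card_lt (hσ : PM σ) {a : ℤ} (ha : a = 1 ∨ a = -1) (t : ℕ) (v : V)
    (h : #(G.neighborFinset v) < 2 * #{u ∈ G.neighborFinset v | dyn G σ t u = a}) :
    dyn G σ (t + 1) v = a := by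
  set N := G.neighborFinset v
  have hsum : a * ∑ u ∈ N, dyn G σ t u
      = #{u ∈ N | dyn G σ t u = a} - #{u ∈ N | ¬dyn G σ t u = a} := by
    have h_agree : ∀ u ∈ {u ∈ N | dyn G σ t u = a}, a * dyn G σ t u = 1 := fun u hu => by
      rw [(mem_filter.mp hu).2]; rcases ha with rfl | rfl <;> norm_num
    have h_disagree : ∀ u ∈ {u ∈ N | ¬dyn G σ t u = a}, a * dyn G σ t u = -1 := fun u hu => by
      have := (mem_filter.mp hu).2
      rcases ha with rfl | rfl <;> rcases dyn_pm G hσ t u with h | h <;> simp_all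
    rw [mul_sum, ← sum_filter_add_sum_filter_not N (fun u => dyn G σ t u = a),
      sum_congr rfl h_agree, sum_congr rfl h_disagree]
    simp [sub_eq_add_neg]
  have hcard := card_filter_add_card_filter_not (s := N) (fun u => dyn G σ t u = a)
  have hpos : 0 < a * ∑ u ∈ N, dyn G σ t u := by rw [hsum]; omega
  rw [dyn_succ]
  rcases ha with rfl | rfl
  · simp only [one_mul, N] at hpos
    simp [hpos]
  · simp only [neg_one_mul, neg_pos, N] at hpos
    simp [hpos.le]

lemma leafNbrs_eq_card (v : V) : leafNbrs G v = #{u ∈ G.neighborFinset v | IsLeaf G u} := by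
  rw [leafNbrs, ← Set.ncard_coe_finset]
  congr 1
  ext u
  simp

lemma exists_adj_flip (hσ : PM σ) {s : ℕ} {u : V} (h : dyn G σ (s + 3) u ≠ dyn G σ (s + 1) u) :
    ∃ x, G.Adj u x ∧ dyn G σ (s + 2) x = dyn G σ (s + 3) u ∧ dyn G σ (s + 2) x ≠ dyn G σ s x := by
  have h1 := dyn_succ (G := G) (σ := σ) s u
  have h3 : dyn G σ (s + 3) u = _ := dyn_succ (s + 2) u
  by_cases hA : 0 < ∑ x ∈ G.neighborFinset u, dyn G σ s x <;>
    by_cases hB : 0 < ∑ x ∈ G.neighborFinset u, dyn G σ (s + 2) x <;>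
    simp only [hA, hB, if_true, if_false] at h1 h3
  · exact absurd (h3.trans h1.symm) h
  · obtain ⟨x, hx, hlt⟩ := exists_lt_of_sum_lt (by omega :
      ∑ x ∈ G.neighborFinset u, dyn G σ (s + 2) x < ∑ x ∈ G.neighborFinset u, dyn G σ s x)
    refine ⟨x, (mem_neighborFinset _ _ _).mp hx, ?_, hlt.ne⟩
    rcases dyn_pm G hσ s x with h0 | h0 <;> rcases dyn_pm G hσ (s + 2) x with h2 | h2 <;> omega
  · obtain ⟨x, hx, hlt⟩ := exists_lt_of_sum_lt (by omega :
      ∑ x ∈ G.neighborFinset u, dyn G σ s x < ∑ x ∈ G.neighborFinset u, dyn G σ (s + 2) x)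
    refine ⟨x, (mem_neighborFinset _ _ _).mp hx, ?_, hlt.ne'⟩
    rcases dyn_pm G hσ s x with h0 | h0 <;> rcases dyn_pm G hσ (s + 2) x with h2 | h2 <;> omega
  · exact absurd (h3.trans h1.symm) h

lemma dyn_add_two_eq_of_not_active (hσ : PM σ) {s : ℕ} {u v : V} (huv : G.Adj u v)
    (hv : ¬IsLeaf G v) (hu : ¬Active G u) (hflip : dyn G σ (s + 2) u ≠ dyn G σ s u) :
    dyn G σ (s + 2) u = dyn G σ (s + 1) v := by
  by_contra hne
  have hvu : dyn G σ (s + 1) v = dyn G σ s u := by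
    rcases dyn_pm G hσ s u with h0 | h0 <;> rcases dyn_pm G hσ (s + 1) v with h1 | h1 <;>
      rcases dyn_pm G hσ (s + 2) u with h2 | h2 <;> simp_all
  have hsub : insert v {x ∈ G.neighborFinset u | IsLeaf G x} ⊆
      {x ∈ G.neighborFinset u | dyn G σ (s + 1) x = dyn G σ s u} := by
    intro x hx
    rcases mem_insert.mp hx with rfl | hx
    · exact mem_filter.mpr ⟨(mem_neighborFinset _ _ _).mpr huv, hvu⟩
    · obtain ⟨hxN, hxl⟩ := mem_filter.mp hx
      exact mem_filter.mpr
        ⟨hxN, dyn_succ_of_isLeaf hσ hxl ((mem_neighborFinset _ _ _).mp hxN).symm s⟩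
  have hcard := Finset.card_le_card hsub
  rw [card_insert_of_notMem (by simp [hv])] at hcard
  have hmaj := dyn_succ_eq_of_card_lt (G := G) hσ (dyn_pm G hσ s u) (s + 1) u (by
    rw [Active, leafNbrs_eq_card, degree'_eq_card] at hu
    omega)
  exact hflip hmaj

theorem dyn_add_two_eq_of_flip (hG : G.IsAcyclic) (hσ : PM σ) {k s : ℕ} {u v : V}
    (huv : G.Adj u v) (hv : ¬IsLeaf G v) (hk : ActivePathsLE G u v k) (hks : k ≤ s)
    (hflip : dyn G σ (s + 2) u ≠ dyn G σ s u) : dyn G σ (s + 2) u = dyn G σ (s + 1) v := by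
  induction k generalizing s u v with
  | zero =>
    refine dyn_add_two_eq_of_not_active hσ huv hv (fun hu => ?_) hflip
    simpa using hk u .nil .nil (by simpa using hu) (by simpa using huv.ne')
  | succ k ih =>
    by_cases hu : Active G u
    · obtain ⟨s, rfl⟩ : ∃ s', s = s' + 1 := ⟨s - 1, by omega⟩
      obtain ⟨x, hux, hx, hxflip⟩ := exists_adj_flip hσ hflip
      by_cases hxv : x = v
      · exact hxv ▸ hx.symm
      · have hxu := ih hux.symm (not_isLeaf_of_active hu) (hk.of_adj hG hu hux huv hxv)
          (by omega) hxflip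
        exact absurd (hx.symm.trans hxu) hflip
    · exact dyn_add_two_eq_of_not_active hσ huv hv hu hflip

end MajorityDynamics

theorem active_stable_general [Fintype V] (G : SimpleGraph V) (hT : G.IsTree)
    (v : V) (hv : Active G v) (t : ℕ)
    (hmax : ∀ (w : V) (p : G.Walk v w), p.IsPath → (∀ x ∈ p.support, Active G x) →
      p.length + 1 ≤ t)
    (σ : V → ℤ) (hσ : PM σ) :
    Stable (dyn G σ) v t := by
  classical
  intro s hs _
  have ht : 1 ≤ t := by simpa using hmax v .nil .nil (by simpa using hv)
  obtain ⟨s, rfl⟩ : ∃ s', s = s' + 1 := ⟨s - 1, by omega⟩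
  by_contra hflip
  obtain ⟨x, hvx, hx, hxflip⟩ := exists_adj_flip hσ hflip
  have hx_paths : ActivePathsLE G x v (t - 1) := fun w p hp hpa hvp => by
    have := hmax w (.cons hvx p) (hp.cons hvp) (by simpa [hv] using hpa)
    simp only [Walk.length_cons] at this
    omega
  have hxv := dyn_add_two_eq_of_flip hT.isAcyclic hσ hvx.symm (not_isLeaf_of_active hv)
    hx_paths (by omega) hxflip
  exact hflip (hx.symm.trans hxv)

/-- If `v` is an active vertex of a tree with odd degrees and `t` is the
maximum number of vertices of a path of active vertices starting at `v`, then `v` is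
`t`-stable for any majority dynamics. -/
theorem active_stable [Fintype V] (G : SimpleGraph V) (hT : G.IsTree)
    (hodd : OddDegrees G) (v : V) (hv : Active G v) (t : ℕ)
    (hmax : ∀ (w : V) (p : G.Walk v w), p.IsPath → (∀ x ∈ p.support, Active G x) →
      p.length + 1 ≤ t)
    (hex : ∃ (w : V) (p : G.Walk v w), p.IsPath ∧ (∀ x ∈ p.support, Active G x) ∧
      p.length + 1 = t)
    (σ : V → ℤ) (hσ : PM σ) :
    Stable (dyn G σ) v t :=
  active_stable_general G hT v hv t hmax σ hσ
end

section
/- Let u be the parent of a weakly t_1-stable vertex v in a perfect binary tree, let t_2 > t_1 with t_2 ≡ t_1 (mod 2), and suppose ξ_t(u) = ξ_{t_1}(v) for every t ∈ {t_1+1, t_1+3, ..., t_2−1}. Then ξ_{t_2}(v) = ξ_{t_1}(v). -/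
/-! Let `σ'` witness the weak stability of `v`. Started from `ξ_{t₁}` and from `σ'`, the two
processes agree at time `s ≤ t₂ - t₁` on every descendant `w` of `v` with `s + d(v, w)` even:
information moves one edge per step, and the only neighbour of the subtree outside it is `u`.
At odd times `u` votes `ξ_{t₁}(v)`, which by 0-stability is exactly what `v` shows at the next
step under `σ'`; so the vote of `u` never changes the outcome at `v`. At time `t₂` this gives
`ξ_{t₂}(v) = σ'(v) = ξ_{t₁}(v)`. -/

open SimpleGraph Set

variable {V : Type*}

/-- `G` is a perfect `k`-ary tree of height `h` rooted at `R`. -/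
noncomputable def IsPerfectKAry (G : SimpleGraph V) (R : V) (k h : ℕ) : Prop :=
  G.IsTree ∧ (∀ v, degree' G v = 1 ∨ degree' G v = k + 1) ∧
    (∀ v, degree' G v = 1 → G.dist R v = h) ∧ degree' G R = k + 1

/-- The set of descendants of `v` (including `v`) in the tree rooted at `R`:
those vertices `u` such that `v` lies on the (unique) geodesic from `R` to `u`. -/
noncomputable def desc (G : SimpleGraph V) (R v : V) : Set V :=
  {u | G.dist R u = G.dist R v + G.dist v u}

/-- `p` is the parent of `c` in the tree rooted at `R`. -/
noncomputable def IsParent (G : SimpleGraph V) (R p c : V) : Prop :=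
  G.Adj p c ∧ G.dist R p + 1 = G.dist R c

/-- `v` is weakly `t`-stable for the process `ξ` (in the tree rooted at `R`): there is a
vector of initial opinions agreeing with `ξ t` on the subtree of descendants of `v` for
which `v` is 0-stable. -/
noncomputable def WeaklyStable (G : SimpleGraph V) (R : V) (ξ : ℕ → V → ℤ) (v : V)
    (t : ℕ) : Prop :=
  ∃ σ' : V → ℤ, PM σ' ∧ (∀ w ∈ desc G R v, σ' w = ξ t w) ∧
    ∀ s, s % 2 = 0 → dyn G σ' (s + 2) v = dyn G σ' s v

variable {G : SimpleGraph V}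

namespace SimpleGraph

variable {R u v w n : V}

lemma Connected.exists_adj_dist_add_one_eq (hG : G.Connected) (hvw : v ≠ w) :
    ∃ m, G.Adj m w ∧ G.dist v m + 1 = G.dist v w := by
  obtain ⟨p, -, hp⟩ := hG.exists_path_of_dist v w
  have hnil : ¬p.Nil := fun h => hvw h.eq
  refine ⟨p.penultimate, p.adj_penultimate hnil, ?_⟩
  have hle : G.dist v p.penultimate ≤ G.dist v w - 1 := by
    simpa [Walk.length_dropLast, hp] using dist_le p.dropLast
  have hge : G.dist v w ≤ G.dist v p.penultimate + 1 := by
    simpa [dist_eq_one_iff_adj.2 (p.adj_penultimate hnil)] using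
      (hG.dist_triangle (u := v) (v := p.penultimate) (w := w))
  have := hG.pos_dist_of_ne hvw
  omega

lemma IsTree.eq_penultimate_of_isParent (hG : G.IsTree) {p : G.Walk R v} (hp : p.IsPath)
    (hn : IsParent G R n v) : n = p.penultimate := by
  obtain ⟨q, -, hq⟩ := hG.connected.exists_path_of_dist R n
  have hqv : (q.concat hn.1).IsPath :=
    Walk.isPath_of_length_eq_dist _ (by rw [Walk.length_concat, hq, hn.2])
  rw [(hG.existsUnique_path R v).unique hp hqv, Walk.penultimate_concat]

lemma IsTree.isParent_unique (hG : G.IsTree) (hn : IsParent G R n v) (hu : IsParent G R u v) :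
    n = u := by
  obtain ⟨p, hp, -⟩ := hG.connected.exists_path_of_dist R v
  rw [hG.eq_penultimate_of_isParent hp hn, hG.eq_penultimate_of_isParent hp hu]

lemma IsTree.dist_eq_add_one_of_adj_of_not_isParent (hG : G.IsTree) (hadj : G.Adj v n)
    (hn : ¬IsParent G R n v) : G.dist R n = G.dist R v + 1 :=
  (hG.dist_eq_dist_add_one_of_adj R hadj).resolve_left fun h => hn ⟨hadj.symm, h.symm⟩

lemma IsTree.mem_desc_of_adj_of_not_isParent (hG : G.IsTree) (hadj : G.Adj v n)
    (hn : ¬IsParent G R n v) : n ∈ desc G R v := by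
  show G.dist R n = G.dist R v + G.dist v n
  rw [dist_eq_one_iff_adj.2 hadj]
  exact hG.dist_eq_add_one_of_adj_of_not_isParent hadj hn

/-- Leaving the subtree of `v` from `w ≠ v` would mean reaching the parent of `w`, which is the
predecessor of `w` on the geodesic from `v`. -/
lemma IsTree.mem_desc_of_adj (hG : G.IsTree) (hw : w ∈ desc G R v) (hwv : w ≠ v)
    (hadj : G.Adj w n) : n ∈ desc G R v := by
  have hw : G.dist R w = G.dist R v + G.dist v w := hw
  show G.dist R n = G.dist R v + G.dist v n
  have tri (a b c : V) := hG.connected.dist_triangle (u := a) (v := b) (w := c)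
  obtain ⟨m, hmw, hm⟩ := hG.connected.exists_adj_dist_add_one_eq hwv.symm
  have hRm := tri R v m
  have hRw := tri R m w
  rw [dist_eq_one_iff_adj.2 hmw] at hRw
  obtain rfl | hnm := eq_or_ne n m
  · omega
  have hmpar : IsParent G R m w := ⟨hmw, by omega⟩
  have hRn := hG.dist_eq_add_one_of_adj_of_not_isParent hadj
    fun hn => hnm (hG.isParent_unique hn hmpar)
  have hvn := tri v w n
  rw [dist_eq_one_iff_adj.2 hadj] at hvn
  have := tri R v n
  omega

end SimpleGraph

lemma mem_desc_self (R v : V) : v ∈ desc G R v := by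
  simp [desc]

lemma IsPerfectKAry.finite_neighborSet {R : V} {k h : ℕ} (hG : IsPerfectKAry G R k h) (v : V) :
    (G.neighborSet v).Finite :=
  Set.finite_of_ncard_ne_zero <| show degree' G v ≠ 0 by rcases hG.2.1 v with h | h <;> omega

lemma finsum_mem_eq_add_finsum_mem_sdiff {α M : Type*} [AddCommMonoid M] {s : Set α} {a : α}
    (ha : a ∈ s) (hs : s.Finite) (f : α → M) :
    ∑ᶠ i ∈ s, f i = f a + ∑ᶠ i ∈ s \ {a}, f i := by
  rw [← finsum_mem_add_sdiff (singleton_subset_iff.2 ha) hs, finsum_mem_singleton]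

/-- A `±1` vote that decides a majority against any `±1` opponent decides it for itself too. -/
lemma ite_pos_add_eq_self {x e S : ℤ} (he : e = 1 ∨ e = -1)
    (hx : x = if 0 < e + S then 1 else -1) : (if 0 < x + S then 1 else -1) = x := by
  split_ifs at hx <;> split_ifs <;> omega

lemma dyn_succ_apply (σ : V → ℤ) (t : ℕ) (v : V) :
    dyn G σ (t + 1) v = if 0 < ∑ᶠ n ∈ G.neighborSet v, dyn G σ t n then 1 else -1 :=
  rfl

lemma dyn_add (σ : V → ℤ) (t s : ℕ) : dyn G σ (t + s) = dyn G (dyn G σ t) s := by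
  induction s with
  | zero => rfl
  | succ s ih => funext v; rw [← Nat.add_assoc, dyn_succ_apply, dyn_succ_apply, ih]

lemma PM.dyn {σ : V → ℤ} (hσ : PM σ) : ∀ t, PM (dyn G σ t)
  | 0 => hσ
  | _ + 1 => fun v => by rw [dyn_succ_apply]; split_ifs <;> simp

lemma Stable.eq_of_le {ξ : ℕ → V → ℤ} {v : V} {t s : ℕ} (h : Stable ξ v t) (hts : t ≤ s)
    (hpar : s % 2 = t % 2) : ξ s v = ξ t v := by
  obtain ⟨k, rfl⟩ : ∃ k, s = t + 2 * k := ⟨(s - t) / 2, by omega⟩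
  induction k with
  | zero => rfl
  | succ k ih =>
    rw [show t + 2 * (k + 1) = t + 2 * k + 2 by ring, h _ (by omega) (by omega),
      ih (by omega) (by omega)]

section Subtree

variable {R u v : V} {τ σ' : V → ℤ}

lemma dyn_succ_eq_of_parent_vote {s : ℕ} (hfin : (G.neighborSet v).Finite)
    (hu : u ∈ G.neighborSet v) (hσ' : PM σ')
    (hS : ∀ n ∈ G.neighborSet v \ {u}, dyn G τ s n = dyn G σ' s n)
    (hτu : dyn G τ s u = dyn G σ' (s + 1) v) : dyn G τ (s + 1) v = dyn G σ' (s + 1) v := by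
  have hσ'v := dyn_succ_apply (G := G) σ' s v
  rw [finsum_mem_eq_add_finsum_mem_sdiff hu hfin] at hσ'v
  rw [dyn_succ_apply τ, finsum_mem_eq_add_finsum_mem_sdiff hu hfin, finsum_mem_congr rfl hS, hτu]
  exact ite_pos_add_eq_self (hσ'.dyn s u) hσ'v

lemma dyn_eq_dyn_of_mem_desc (hG : G.IsTree) (hu : IsParent G R u v)
    (hfin : (G.neighborSet v).Finite) (hσ' : PM σ') (hagree : ∀ w ∈ desc G R v, σ' w = τ w)
    (hstab : Stable (dyn G σ') v 0) {N : ℕ} (hop : ∀ s < N, s % 2 = 1 → dyn G τ s u = τ v) :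
    ∀ s ≤ N, ∀ w ∈ desc G R v, (s + G.dist v w) % 2 = 0 → dyn G τ s w = dyn G σ' s w := by
  intro s
  induction s with
  | zero => exact fun _ w hw _ => (hagree w hw).symm
  | succ s ih =>
    intro hs w hw hpar
    obtain rfl | hvw := eq_or_ne v w
    · rw [dist_self] at hpar
      refine dyn_succ_eq_of_parent_vote hfin hu.1.symm hσ' (fun n ⟨hn, hnu⟩ => ?_) ?_
      · have hnd := hG.mem_desc_of_adj_of_not_isParent hn fun h => hnu (hG.isParent_unique h hu)
        exact ih (by omega) n hnd (by rw [dist_eq_one_iff_adj.2 hn]; omega)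
      · rw [hop s (by omega) (by omega), hstab.eq_of_le (Nat.zero_le _) (by omega)]
        exact (hagree v hw).symm
    · rw [dyn_succ_apply τ, dyn_succ_apply σ']
      refine congrArg (fun S => if 0 < S then (1 : ℤ) else -1) <|
        finsum_mem_congr rfl fun n hn => ?_
      have := hG.dist_eq_dist_add_one_of_adj v hn
      exact ih (by omega) n (hG.mem_desc_of_adj hw hvw.symm hn) (by omega)

lemma dyn_eq_self_of_parent_vote (hG : G.IsTree) (hu : IsParent G R u v)
    (hfin : (G.neighborSet v).Finite) (hσ' : PM σ') (hagree : ∀ w ∈ desc G R v, σ' w = τ w)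
    (hstab : Stable (dyn G σ') v 0) {N : ℕ} (hop : ∀ s < N, s % 2 = 1 → dyn G τ s u = τ v)
    (hN : N % 2 = 0) : dyn G τ N v = τ v := by
  rw [dyn_eq_dyn_of_mem_desc hG hu hfin hσ' hagree hstab hop N le_rfl v (mem_desc_self R v)
    (by simpa using hN), hstab.eq_of_le (Nat.zero_le N) (by omega)]
  exact hagree v (mem_desc_self R v)

end Subtree

theorem maintain_weak_value_general (G : SimpleGraph V) (R : V) (h : ℕ)
    (hperf : IsPerfectKAry G R 2 h) (v u : V) (hu : IsParent G R u v)
    (σ : V → ℤ) (t₁ t₂ : ℕ) (hlt : t₁ < t₂) (hpar : t₂ % 2 = t₁ % 2)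
    (hw : WeaklyStable G R (dyn G σ) v t₁)
    (hop : ∀ t, t₁ < t → t < t₂ → t % 2 ≠ t₁ % 2 → dyn G σ t u = dyn G σ t₁ v) :
    dyn G σ t₂ v = dyn G σ t₁ v := by
  obtain ⟨σ', hσ', hagree, hstab⟩ := hw
  obtain ⟨N, rfl⟩ := Nat.exists_eq_add_of_le hlt.le
  rw [dyn_add]
  refine dyn_eq_self_of_parent_vote hperf.1 hu (hperf.finite_neighborSet v) hσ' hagree
    (fun s _ hs => hstab s hs) (fun s hs hodd => ?_) (by omega)
  rw [← dyn_add]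
  exact hop _ (by omega) (by omega) (by omega)

/-- If `u` is the parent of a weakly `t₁`-stable non-root vertex `v` of a
perfect binary tree, `t₂ > t₁` has the same parity as `t₁`, and `ξ_t(u) = ξ_{t₁}(v)` for
every `t ∈ {t₁+1, t₁+3, …, t₂-1}`, then `ξ_{t₂}(v) = ξ_{t₁}(v)`. -/
theorem maintain_weak_value [Fintype V] (G : SimpleGraph V) (R : V) (h : ℕ) (hh : 1 ≤ h)
    (hperf : IsPerfectKAry G R 2 h) (v u : V) (hv : v ≠ R) (hu : IsParent G R u v)
    (σ : V → ℤ) (hσ : PM σ) (t₁ t₂ : ℕ) (hlt : t₁ < t₂) (hpar : t₂ % 2 = t₁ % 2)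
    (hw : WeaklyStable G R (dyn G σ) v t₁)
    (hop : ∀ t, t₁ < t → t < t₂ → t % 2 ≠ t₁ % 2 → dyn G σ t u = dyn G σ t₁ v) :
    dyn G σ t₂ v = dyn G σ t₁ v :=
  maintain_weak_value_general G R h hperf v u hu σ t₁ t₂ hlt hpar hw hop
end
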